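/- Let 𝒜 be an abelian category with enough projectives, B an object of 𝒜, and P_B : ⋯ → P^{-2} → P^{-1} → B → 0 an augmented projective resolution of B (an exact complex with each P^{-i} projective, B in degree 0). Then for a fixed n ≥ 0, one has H^{-n} Hom_𝒜(A, P_B) = 0 for every object A of 𝒜 if and only if B has projective dimension at most n. -/

import Mathlib

open CategoryTheory Limits ZeroObject

universe v u

variable {A : Type u} [Category.{v} A] [Abelian A]

/-- An augmented projective resolution of `B` : a cochain complex
`⋯ → P^{-2} → P^{-1} → B → 0` concentrated in degrees `≤ 0`, with `B` in degree `0`,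
projective terms in negative degrees, which is exact (acyclic). -/
structure IsAugmentedProjResolution (B : A) (C : CochainComplex A ℤ) where
  degZeroIso : C.X 0 ≅ B
  isZero_of_pos : ∀ i : ℤ, 0 < i → Limits.IsZero (C.X i)
  projective : ∀ i : ℤ, i < 0 → Projective (C.X i)
  exactAt : ∀ n : ℤ, C.ExactAt n

/-- `B` has projective dimension at most `n` : there is an exact complex
`0 → Q^{-(n+1)} → ⋯ → Q^{-1} → B → 0` with all the `Q^{-i}` projective, i.e. an
augmented projective resolution vanishing in degrees `< -(n+1)`. For `n = 0` this
means exactly that `B` is projective. -/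
def HasProjDimLE (B : A) (n : ℕ) : Prop :=
  ∃ C : CochainComplex A ℤ, Nonempty (IsAugmentedProjResolution B C) ∧
    ∀ i : ℤ, i < -(n + 1 : ℤ) → Limits.IsZero (C.X i)

/-- The `n`-th syzygy `Ω^n(B)` of `B` with respect to an augmented projective resolution
`P_B`, with `Ω^0(B) = B` and `Ω^n(B) = Ker(P^{-n} → P^{-n+1})` for `n ≥ 1`. -/
noncomputable def syzygy (B : A) (C : CochainComplex A ℤ) : ℕ → A
  | 0 => B
  | (n + 1) => kernel (C.d (-(n + 1 : ℤ)) (-(n + 1 : ℤ) + 1))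

/-- The subgroup of `Hom_𝒜(a, b)` of morphisms factoring through a projective object. -/
def projFactorSubgroup (a b : A) : AddSubgroup (a ⟶ b) where
  carrier := {f | ∃ (T : A) (_ : Projective T) (u : a ⟶ T) (v : T ⟶ b), u ≫ v = f}
  zero_mem' := ⟨0, inferInstance, 0, 0, by simp⟩
  add_mem' := by
    rintro f g ⟨T, hT, u, v, rfl⟩ ⟨T', hT', u', v', rfl⟩
    haveI := hT
    haveI := hT'
    exact ⟨T ⊞ T', inferInstance, biprod.lift u u', biprod.desc v v', by simp⟩
  neg_mem' := by
    rintro f ⟨T, hT, u, v, rfl⟩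
    exact ⟨T, hT, -u, v, by simp⟩


section Aux

lemma vanish_iff (A₀ : A) (P : CochainComplex A ℤ) (i : ℤ) :
    IsZero ((((preadditiveCoyoneda.obj (Opposite.op A₀)).mapHomologicalComplex
        (ComplexShape.up ℤ)).obj P).homology i) ↔
    ∀ f : A₀ ⟶ P.X i, f ≫ P.d i (i+1) = 0 →
      ∃ g : A₀ ⟶ P.X (i-1), g ≫ P.d (i-1) i = f := by
  rw [← HomologicalComplex.exactAt_iff_isZero_homology,
      HomologicalComplex.exactAt_iff' _ (i-1) i (i+1) (by simp) (by simp),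
      ShortComplex.ab_exact_iff]
  constructor
  · intro h f hf
    obtain ⟨g, hg⟩ := h f hf
    exact ⟨g, hg⟩
  · intro h f hf
    obtain ⟨g, hg⟩ := h f hf
    exact ⟨g, hg⟩


lemma projective_of_retract {X Y : A} (hY : Projective Y) (s : X ⟶ Y) (r : Y ⟶ X)
    (h : s ≫ r = 𝟙 X) : Projective X where
  factors {E T} f e he := by
    obtain ⟨g, hg⟩ := hY.factors (r ≫ f) e
    exact ⟨s ≫ g, by rw [Category.assoc, hg, ← Category.assoc, h, Category.id_comp]⟩

/-- the corestriction `P^{i-1} → K = ker d^i` -/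
noncomputable def cores (P : CochainComplex A ℤ) (i : ℤ) :
    P.X (i-1) ⟶ kernel (P.d i (i+1)) :=
  kernel.lift _ (P.d (i-1) i) (P.d_comp_d _ _ _)

lemma cores_ι (P : CochainComplex A ℤ) (i : ℤ) :
    cores P i ≫ kernel.ι _ = P.d (i-1) i := kernel.lift_ι _ _ _

lemma epi_cores {B : A} {P : CochainComplex A ℤ} (hP : IsAugmentedProjResolution B P)
    (i : ℤ) : Epi (cores P i) := by
  have h := hP.exactAt i
  rw [HomologicalComplex.exactAt_iff' _ (i-1) i (i+1) (by simp) (by simp),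
    ShortComplex.exact_iff_epi_kernel_lift] at h
  exact h

lemma surj_iff_projective_ker {B : A} {P : CochainComplex A ℤ}
    (hP : IsAugmentedProjResolution B P) (i : ℤ) (hi : i ≤ 0) :
    (∀ A₀ : A, ∀ f : A₀ ⟶ P.X i, f ≫ P.d i (i+1) = 0 →
      ∃ g : A₀ ⟶ P.X (i-1), g ≫ P.d (i-1) i = f) ↔
    Projective (kernel (P.d i (i+1))) := by
  constructor
  · intro h
    obtain ⟨g, hg⟩ := h _ (kernel.ι (P.d i (i+1))) (kernel.condition _)
    refine projective_of_retract (hP.projective (i-1) (by omega)) g (cores P i) ?_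
    rw [← cancel_mono (kernel.ι (P.d i (i+1))), Category.assoc, cores_ι, hg,
      Category.id_comp]
  · intro hK A₀ f hf
    have he : Epi (cores P i) := epi_cores hP i
    obtain ⟨σ, hσ⟩ := hK.factors (𝟙 (kernel (P.d i (i+1)))) (cores P i)
    refine ⟨kernel.lift (P.d i (i+1)) f hf ≫ σ, ?_⟩
    rw [← cores_ι, Category.assoc, ← Category.assoc σ, hσ, Category.id_comp,
      kernel.lift_ι]


lemma epi_kernel_lift_d {B : A} {C : CochainComplex A ℤ}
    (hC : IsAugmentedProjResolution B C) (j i : ℤ) (hij : j + 1 = i) :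
    Epi (kernel.lift (C.d i (i+1)) (C.d j i) (C.d_comp_d j i (i+1))) := by
  have h := hC.exactAt i
  rw [HomologicalComplex.exactAt_iff' _ j i (i+1) (by first | (simp; omega) | simp) (by simp)] at h
  rw [ShortComplex.exact_iff_epi_kernel_lift] at h
  exact h

lemma factor_step {B : A} {C : CochainComplex A ℤ}
    (hC : IsAugmentedProjResolution B C) {X : A} (hX : Projective X)
    {j i : ℤ} (hij : j + 1 = i) (u : X ⟶ C.X i) (hu : u ≫ C.d i (i+1) = 0) :
    ∃ g : X ⟶ C.X j, g ≫ C.d j i = u := by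
  have he := epi_kernel_lift_d hC j i hij
  obtain ⟨g, hg⟩ := hX.factors (kernel.lift (C.d i (i+1)) u hu)
    (kernel.lift (C.d i (i+1)) (C.d j i) (C.d_comp_d j i (i+1)))
  refine ⟨g, ?_⟩
  have h2 : kernel.lift (C.d i (i+1)) (C.d j i) (C.d_comp_d j i (i+1)) ≫
      kernel.ι (C.d i (i+1)) = C.d j i := kernel.lift_ι _ _ _
  rw [← h2, ← Category.assoc, hg, kernel.lift_ι]

lemma surj_of_bounded {B : A} {C : CochainComplex A ℤ}
    (hC : IsAugmentedProjResolution B C) (i : ℤ) (hbd : IsZero (C.X (i-2)))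
    {X : A} (f : X ⟶ C.X i) (hf : f ≫ C.d i (i+1) = 0) :
    ∃ g : X ⟶ C.X (i-1), g ≫ C.d (i-1) i = f := by
  set e := kernel.lift (C.d i (i+1)) (C.d (i-1) i) (C.d_comp_d (i-1) i (i+1)) with he
  have hepi : Epi e := epi_kernel_lift_d hC (i-1) i (by omega)
  have hd : Mono (C.d (i-1) i) := by
    have h := hC.exactAt (i-1)
    rw [HomologicalComplex.exactAt_iff' _ (i-2) (i-1) i (by first | (simp; omega) | simp)
      (by first | (simp; omega) | simp)] at h
    exact h.mono_g (hbd.eq_of_src _ _)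
  have hmono : Mono e := by
    have h2 : e ≫ kernel.ι (C.d i (i+1)) = C.d (i-1) i := kernel.lift_ι _ _ _
    exact mono_of_mono_fac h2
  have : IsIso e := isIso_of_mono_of_epi e
  refine ⟨kernel.lift (C.d i (i+1)) f hf ≫ inv e, ?_⟩
  have h2 : e ≫ kernel.ι (C.d i (i+1)) = C.d (i-1) i := kernel.lift_ι _ _ _
  rw [← h2, Category.assoc, ← Category.assoc (inv e), IsIso.inv_hom_id,
    Category.id_comp, kernel.lift_ι]

def idx : ℕ → ℤ
  | 0 => 0
  | (k+1) => idx k - 1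

lemma idx_eq (k : ℕ) : idx k = -(k:ℤ) := by
  induction k with
  | zero => rfl
  | succ m ih => rw [idx, ih]; push_cast; ring

lemma d_congr_tgt (C : CochainComplex A ℤ) {i j j' : ℤ} (h : j = j') :
    C.d i j = C.d i j' ≫ eqToHom (by rw [h]) := by subst h; simp

variable {B : A} {P C : CochainComplex A ℤ}

/-- Recursive construction of a lift of the identity of `B` to a chain map
between augmented resolutions, as a sequence of pairs of consecutive components
with the commutation relation. -/
noncomputable def LP (hP : IsAugmentedProjResolution B P)
    (hC : IsAugmentedProjResolution B C) :
    (k : ℕ) → Σ' (f : P.X (idx (k+1)) ⟶ C.X (idx (k+1)))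
      (g : P.X (idx k) ⟶ C.X (idx k)),
      f ≫ C.d (idx (k+1)) (idx k) = P.d (idx (k+1)) (idx k) ≫ g
  | 0 =>
    let g : P.X (idx 0) ⟶ C.X (idx 0) := hP.degZeroIso.hom ≫ hC.degZeroIso.inv
    have hu : (P.d (idx 1) (idx 0) ≫ g) ≫ C.d (idx 0) (idx 0 + 1) = 0 :=
      (hC.isZero_of_pos (idx 0 + 1) (by simp only [idx_eq]; omega)).eq_of_tgt _ _
    have h := factor_step hC (hP.projective (idx 1) (by simp only [idx_eq]; omega))
      (show idx 1 + 1 = idx 0 by simp only [idx_eq]; omega) _ hu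
    ⟨h.choose, g, h.choose_spec⟩
  | (k+1) =>
    let prev := LP hP hC k
    have hu : (P.d (idx (k+2)) (idx (k+1)) ≫ prev.1) ≫
        C.d (idx (k+1)) (idx (k+1) + 1) = 0 := by
      have h1 : (P.d (idx (k+2)) (idx (k+1)) ≫ prev.1) ≫ C.d (idx (k+1)) (idx k) = 0 := by
        rw [Category.assoc, prev.2.2, ← Category.assoc, P.d_comp_d, zero_comp]
      rw [d_congr_tgt C (show idx (k+1) + 1 = idx k by simp only [idx_eq]; omega),
        ← Category.assoc, h1, zero_comp]
    have h := factor_step hC (hP.projective (idx (k+2)) (by simp only [idx_eq]; omega))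
      (show idx (k+2) + 1 = idx (k+1) by simp only [idx_eq]; omega) _ hu
    ⟨h.choose, prev.1, h.choose_spec⟩

/-- The components of a chain map `P ⟶ C` lifting the identity of `B`. -/
noncomputable def Φf (hP : IsAugmentedProjResolution B P)
    (hC : IsAugmentedProjResolution B C) : ∀ i : ℤ, P.X i ⟶ C.X i := fun i =>
  if h : 0 < i then 0
  else eqToHom (congrArg P.X (show i = idx (-i).toNat by rw [idx_eq]; omega)) ≫
    (LP hP hC (-i).toNat).2.1 ≫
    eqToHom (congrArg C.X (show idx (-i).toNat = i by rw [idx_eq]; omega))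

lemma cast_LP (hP : IsAugmentedProjResolution B P)
    (hC : IsAugmentedProjResolution B C) {m k : ℕ} (h : m = k) :
    eqToHom (congrArg P.X (show idx k = idx m by rw [h])) ≫ (LP hP hC m).2.1 ≫
      eqToHom (congrArg C.X (show idx m = idx k by rw [h])) = (LP hP hC k).2.1 := by
  subst h; simp

lemma Φf_at (hP : IsAugmentedProjResolution B P)
    (hC : IsAugmentedProjResolution B C) (k : ℕ) :
    Φf hP hC (idx k) = (LP hP hC k).2.1 := by
  have h0 : ¬ 0 < idx k := by rw [idx_eq]; omega
  have hm : (-(idx k)).toNat = k := by rw [idx_eq]; omega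
  rw [Φf, dif_neg h0]
  exact cast_LP hP hC hm

lemma Φsq (hP : IsAugmentedProjResolution B P) (hC : IsAugmentedProjResolution B C)
    (i j : ℤ) (hij : i + 1 = j) :
    Φf hP hC i ≫ C.d i j = P.d i j ≫ Φf hP hC j := by
  subst hij
  rcases lt_trichotomy i 0 with hi | hi | hi
  · obtain ⟨k, rfl⟩ : ∃ k : ℕ, i = idx (k+1) := ⟨(-i-1).toNat, by rw [idx_eq]; omega⟩
    rw [show idx (k+1) + 1 = idx k by simp only [idx_eq]; omega, Φf_at, Φf_at]
    exact (LP hP hC k).2.2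
  · subst hi
    apply (hC.isZero_of_pos 1 one_pos).eq_of_tgt
  · rw [Φf, dif_pos hi, zero_comp, Φf, dif_pos (by omega : (0:ℤ) < i + 1), comp_zero]

lemma Φf_zero (hP : IsAugmentedProjResolution B P)
    (hC : IsAugmentedProjResolution B C) :
    Φf hP hC 0 = hP.degZeroIso.hom ≫ hC.degZeroIso.inv := by
  have h := Φf_at hP hC 0
  refine Eq.trans ?_ (Eq.trans h ?_)
  · rfl
  · rfl

/-- The degree-wise defect of `Φ ≫ Ψ` from the identity. -/
noncomputable def γf (hP : IsAugmentedProjResolution B P)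
    (hC : IsAugmentedProjResolution B C) : ∀ i : ℤ, P.X i ⟶ P.X i := fun i =>
  Φf hP hC i ≫ Φf hC hP i - 𝟙 _

lemma γsq (hP : IsAugmentedProjResolution B P) (hC : IsAugmentedProjResolution B C)
    (i j : ℤ) (hij : i + 1 = j) :
    γf hP hC i ≫ P.d i j = P.d i j ≫ γf hP hC j := by
  simp only [γf, Preadditive.sub_comp, Preadditive.comp_sub, Category.id_comp,
    Category.comp_id, Category.assoc]
  congr 1
  rw [Φsq hC hP i j hij, ← Category.assoc, Φsq hP hC i j hij, Category.assoc]

lemma γf_zero (hP : IsAugmentedProjResolution B P)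
    (hC : IsAugmentedProjResolution B C) : γf hP hC 0 = 0 := by
  rw [γf, Φf_zero hP hC, Φf_zero hC hP]
  simp

/-- Recursive construction of a chain homotopy between `Φ ≫ Ψ` and the identity. -/
noncomputable def HP (hP : IsAugmentedProjResolution B P)
    (hC : IsAugmentedProjResolution B C) :
    (k : ℕ) → Σ' (t' : P.X (idx (k+1)) ⟶ P.X (idx (k+2)))
      (t : P.X (idx k) ⟶ P.X (idx (k+1))),
      γf hP hC (idx (k+1)) = P.d (idx (k+1)) (idx k) ≫ t +
        t' ≫ P.d (idx (k+2)) (idx (k+1))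
  | 0 =>
    have hu : γf hP hC (idx 1) ≫ P.d (idx 1) (idx 1 + 1) = 0 := by
      rw [γsq hP hC (idx 1) (idx 1 + 1) rfl,
        show (idx 1 + 1 : ℤ) = 0 by simp only [idx_eq]; omega, γf_zero, comp_zero]
    have h := factor_step hP (hP.projective (idx 1) (by simp only [idx_eq]; omega))
      (show idx 2 + 1 = idx 1 by simp only [idx_eq]; omega) _ hu
    ⟨h.choose, 0, by
      have hs := h.choose_spec
      rw [comp_zero]
      exact hs.symm.trans (zero_add _).symm⟩
  | (k+1) =>
    match HP hP hC k with
    | ⟨t', t, hcond⟩ =>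
      have hprev : t' ≫ P.d (idx (k+2)) (idx (k+1)) =
          γf hP hC (idx (k+1)) - P.d (idx (k+1)) (idx k) ≫ t := by
        rw [hcond]; abel
      have hu : (γf hP hC (idx (k+2)) - P.d (idx (k+2)) (idx (k+1)) ≫ t') ≫
          P.d (idx (k+2)) (idx (k+2) + 1) = 0 := by
        rw [show idx (k+2) + 1 = idx (k+1) by simp only [idx_eq]; omega,
          Preadditive.sub_comp, Category.assoc, hprev, Preadditive.comp_sub,
          γsq hP hC (idx (k+2)) (idx (k+1)) (by simp only [idx_eq]; omega),
          sub_sub_cancel, ← Category.assoc, P.d_comp_d, zero_comp]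
      have h := factor_step hP (hP.projective (idx (k+2)) (by simp only [idx_eq]; omega))
        (show idx (k+3) + 1 = idx (k+2) by simp only [idx_eq]; omega) _ hu
      ⟨h.choose, t', by rw [h.choose_spec]; abel⟩

lemma homotopy_at (hP : IsAugmentedProjResolution B P)
    (hC : IsAugmentedProjResolution B C) (i : ℤ) (hi : i ≤ 0) :
    ∃ (s : P.X (i+1) ⟶ P.X i) (t : P.X i ⟶ P.X (i-1)),
      Φf hP hC i ≫ Φf hC hP i = 𝟙 _ + P.d i (i+1) ≫ s + t ≫ P.d (i-1) i := by
  obtain ⟨k, rfl⟩ : ∃ k : ℕ, i = idx k := ⟨(-i).toNat, by rw [idx_eq]; omega⟩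
  cases k with
  | zero =>
    refine ⟨0, 0, ?_⟩
    have h : Φf hP hC (idx 0) ≫ Φf hC hP (idx 0) = 𝟙 _ := by
      have h2 := γf_zero hP hC
      have h3 : Φf hP hC 0 ≫ Φf hC hP 0 - 𝟙 _ = 0 := h2
      rw [sub_eq_zero] at h3
      exact h3
    rw [h, comp_zero, zero_comp, add_zero, add_zero]
  | succ k =>
    rw [show idx (k+1) + 1 = idx k by simp only [idx_eq]; omega,
      show idx (k+1) - 1 = idx (k+2) from rfl]
    refine ⟨(HP hP hC k).2.1, (HP hP hC k).1, ?_⟩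
    have h := (HP hP hC k).2.2
    simp only [γf] at h
    rw [sub_eq_iff_eq_add] at h
    rw [h]; abel

lemma surjP_of_bounded (hP : IsAugmentedProjResolution B P)
    (hC : IsAugmentedProjResolution B C) (i : ℤ) (hi : i ≤ 0)
    (hbd : IsZero (C.X (i-2))) {A₀ : A} (f : A₀ ⟶ P.X i)
    (hf : f ≫ P.d i (i+1) = 0) : ∃ g : A₀ ⟶ P.X (i-1), g ≫ P.d (i-1) i = f := by
  have hcyc : (f ≫ Φf hP hC i) ≫ C.d i (i+1) = 0 := by
    rw [Category.assoc, Φsq hP hC i (i+1) rfl, ← Category.assoc, hf, zero_comp]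
  obtain ⟨g, hg⟩ := surj_of_bounded hC i hbd (f ≫ Φf hP hC i) hcyc
  obtain ⟨s, t, hst⟩ := homotopy_at hP hC i hi
  refine ⟨g ≫ Φf hC hP (i-1) - f ≫ t, ?_⟩
  rw [Preadditive.sub_comp, Category.assoc, Category.assoc,
    Φsq hC hP (i-1) i (by omega), ← Category.assoc, hg, Category.assoc, hst]
  simp only [Preadditive.comp_add, Category.comp_id]
  rw [← Category.assoc f, ← Category.assoc f, hf, zero_comp]
  abel

lemma projective_of_isZero {X : A} (h : IsZero X) : Projective X where
  factors f e _ := ⟨0, by rw [zero_comp]; exact (h.eq_of_src _ _).symm.trans rfl⟩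

section Trunc

variable (P : CochainComplex A ℤ) (i : ℤ)

noncomputable def truncX (j : ℤ) : A :=
  if j < i - 1 then 0 else if j = i - 1 then kernel (P.d i (i+1)) else P.X j

lemma truncX_lt {j : ℤ} (h : j < i - 1) : truncX P i j = 0 := if_pos h

lemma truncX_m : truncX P i (i-1) = kernel (P.d i (i+1)) := by
  rw [truncX, if_neg (lt_irrefl _), if_pos rfl]

lemma truncX_gt {j : ℤ} (h : i - 1 < j) : truncX P i j = P.X j := by
  rw [truncX, if_neg (by omega), if_neg (by omega)]

noncomputable def truncd (j : ℤ) : truncX P i j ⟶ truncX P i (j+1) :=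
  if h1 : j < i - 1 then 0
  else if h2 : j = i - 1 then
    eqToHom (by rw [h2, truncX_m]) ≫ kernel.ι (P.d i (i+1)) ≫
      eqToHom (show P.X i = truncX P i (j+1) by rw [truncX_gt P i (by omega)]; congr 1; omega)
  else
    eqToHom (truncX_gt P i (by omega)) ≫ P.d j (j+1) ≫
      eqToHom (truncX_gt P i (by omega : i - 1 < j + 1)).symm

lemma truncd_gt {j : ℤ} (h : i - 1 < j) : truncd P i j =
    eqToHom (truncX_gt P i h) ≫ P.d j (j+1) ≫
      eqToHom (truncX_gt P i (by omega : i - 1 < j + 1)).symm := by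
  rw [truncd, dif_neg (by omega), dif_neg (by omega)]

lemma truncd_m : truncd P i (i-1) =
    eqToHom (truncX_m P i) ≫ kernel.ι (P.d i (i+1)) ≫
      eqToHom (show P.X i = truncX P i (i-1+1) by
        rw [truncX_gt P i (by omega)]; congr 1; omega) := by
  rw [truncd, dif_neg (lt_irrefl _), dif_pos rfl]

lemma d_congr_src (C : CochainComplex A ℤ) {i i' j : ℤ} (h : i = i') :
    eqToHom (show C.X i = C.X i' by rw [h]) ≫ C.d i' j = C.d i j := by subst h; simp

noncomputable def truncd2 (j k : ℤ) : truncX P i j ⟶ truncX P i k :=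
  if h : j + 1 = k then truncd P i j ≫ eqToHom (by rw [h]) else 0

lemma truncd2_succ (j : ℤ) : truncd2 P i j (j+1) = truncd P i j := by
  rw [truncd2, dif_pos rfl]
  simp

lemma truncd_comp (j : ℤ) : truncd P i j ≫ truncd P i (j+1) = 0 := by
  rcases lt_trichotomy j (i-1) with h | h | h
  · rw [truncd, dif_pos h, zero_comp]
  · subst h
    rw [truncd_m, truncd_gt P i (by omega)]
    slice_lhs 3 4 => rw [eqToHom_trans]
    rw [d_congr_src P (show i = i - 1 + 1 by omega)]
    slice_lhs 2 3 => rw [d_congr_tgt P (show i - 1 + 1 + 1 = i + 1 by omega),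
      ← Category.assoc, kernel.condition]
    simp
  · rw [truncd_gt P i h, truncd_gt P i (by omega)]
    slice_lhs 3 4 => rw [eqToHom_trans]
    rw [d_congr_src P rfl]
    slice_lhs 2 3 => rw [P.d_comp_d]
    simp

noncomputable def truncC : CochainComplex A ℤ where
  X := truncX P i
  d := truncd2 P i
  shape j k h := dif_neg h
  d_comp_d' j k l hjk hkl := by
    change j + 1 = k at hjk; change k + 1 = l at hkl
    subst hjk; subst hkl
    rw [truncd2_succ, truncd2_succ, truncd_comp]

end Trunc

section Trunc2
variable (P : CochainComplex A ℤ) (i : ℤ)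

lemma truncd2_eq (j k : ℤ) (h : j + 1 = k) :
    truncd2 P i j k = truncd P i j ≫ eqToHom (by rw [h]) := by
  rw [truncd2, dif_pos h]

lemma truncC_isZero {j : ℤ} (h : j < i - 1) : IsZero ((truncC P i).X j) :=
  (isZero_zero A).of_iso (eqToIso (truncX_lt P i h))

lemma truncC_exactAt {B : A} (hP : IsAugmentedProjResolution B P) (j : ℤ) :
    (truncC P i).ExactAt j := by
  rcases lt_trichotomy j (i-1) with h | h | h
  · rw [HomologicalComplex.exactAt_iff]
    exact ShortComplex.exact_of_isZero_X₂ _ (truncC_isZero P i h)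
  · subst h
    rw [HomologicalComplex.exactAt_iff' _ (i-2) (i-1) i
      (by first | (simp; omega) | simp) (by first | (simp; omega) | simp)]
    rw [ShortComplex.exact_iff_mono _ ((truncC_isZero P i (by omega)).eq_of_src _ _)]
    show Mono (truncd2 P i (i-1) i)
    rw [truncd2_eq P i _ _ (by omega), truncd_m]
    infer_instance
  · rcases eq_or_lt_of_le (by omega : i ≤ j) with h2 | h2
    · subst h2
      rw [HomologicalComplex.exactAt_iff' _ (i-1) i (i+1)
        (by first | (simp; omega) | simp) (by first | (simp; omega) | simp)]
      have e : (truncC P i).sc' (i-1) i (i+1) ≅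
          ShortComplex.mk (kernel.ι (P.d i (i+1))) (P.d i (i+1)) (kernel.condition _) := by
        refine ShortComplex.isoMk
          (eqToIso (truncX_m P i)) (eqToIso (truncX_gt P i (by omega)))
          (eqToIso (truncX_gt P i (by omega))) ?_ ?_
        · show eqToHom (truncX_m P i) ≫ kernel.ι (P.d i (i+1)) =
            truncd2 P i (i-1) i ≫ eqToHom (truncX_gt P i (by omega))
          rw [truncd2_eq P i (i-1) i (by omega), truncd_m]
          simp
        · show eqToHom (truncX_gt P i (by omega)) ≫ P.d i (i+1) =
            truncd2 P i i (i+1) ≫ eqToHom (truncX_gt P i (by omega))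
          rw [truncd2_eq P i i (i+1) rfl, truncd_gt P i (by omega)]
          simp
      rw [ShortComplex.exact_iff_of_iso e]
      exact ShortComplex.exact_of_f_is_kernel _ (kernelIsKernel _)
    · rw [HomologicalComplex.exactAt_iff' _ (j-1) j (j+1)
        (by first | (simp; omega) | simp) (by first | (simp; omega) | simp)]
      have e : (truncC P i).sc' (j-1) j (j+1) ≅ P.sc' (j-1) j (j+1) := by
        refine ShortComplex.isoMk (eqToIso (truncX_gt P i (by omega)))
          (eqToIso (truncX_gt P i (by omega))) (eqToIso (truncX_gt P i (by omega))) ?_ ?_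
        · show eqToHom (truncX_gt P i (by omega)) ≫ P.d (j-1) j =
            truncd2 P i (j-1) j ≫ eqToHom (truncX_gt P i (by omega))
          rw [truncd2_eq P i (j-1) j (by omega), truncd_gt P i (by omega),
            d_congr_tgt P (show j-1+1 = j by omega)]
          simp
        · show eqToHom (truncX_gt P i (by omega)) ≫ P.d j (j+1) =
            truncd2 P i j (j+1) ≫ eqToHom (truncX_gt P i (by omega))
          rw [truncd2_eq P i j (j+1) rfl, truncd_gt P i (by omega)]
          simp
      rw [ShortComplex.exact_iff_of_iso e]
      have h3 := hP.exactAt j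
      rw [HomologicalComplex.exactAt_iff' _ (j-1) j (j+1)
        (by first | (simp; omega) | simp) (by first | (simp; omega) | simp)] at h3
      exact h3

end Trunc2

noncomputable def truncC_resolution {B : A} {P : CochainComplex A ℤ}
    (hP : IsAugmentedProjResolution B P) (i : ℤ) (hi : i ≤ 0)
    (hK : Projective (kernel (P.d i (i+1)))) :
    IsAugmentedProjResolution B (truncC P i) where
  degZeroIso := eqToIso (truncX_gt P i (by omega)) ≪≫ hP.degZeroIso
  isZero_of_pos j hj := (hP.isZero_of_pos j hj).of_iso (eqToIso (truncX_gt P i (by omega)))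
  projective j hj := by
    rcases lt_trichotomy j (i-1) with h | h | h
    · exact projective_of_isZero (truncC_isZero P i h)
    · subst h
      exact Projective.of_iso (eqToIso (truncX_m P i).symm) hK
    · exact Projective.of_iso (eqToIso (truncX_gt P i h).symm) (hP.projective j hj)
  exactAt := truncC_exactAt P i hP


end Aux

/-- Example 2.5 (claim): if `𝒜` is an abelian category with enough projectives, `B` an
object and `P_B` an augmented projective resolution of `B`, then for fixed `n ≥ 0`:
`H^{-n} Hom_𝒜(A₀, P_B) = 0` for every object `A₀` if and only if `B` has projective
dimension at most `n`. -/
theorem lowerExt_vanishing_iff_projDimLE [EnoughProjectives A]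
    {B : A} {P : CochainComplex A ℤ} (hP : IsAugmentedProjResolution B P) (n : ℕ) :
    (∀ A₀ : A, Limits.IsZero ((((preadditiveCoyoneda.obj (Opposite.op A₀)).mapHomologicalComplex
        (ComplexShape.up ℤ)).obj P).homology (-(n : ℤ)))) ↔ HasProjDimLE B n := by
  constructor
  · intro h
    have h2 : ∀ A₀ : A, ∀ f : A₀ ⟶ P.X (-(n:ℤ)), f ≫ P.d (-(n:ℤ)) (-(n:ℤ)+1) = 0 →
        ∃ g : A₀ ⟶ P.X (-(n:ℤ)-1), g ≫ P.d (-(n:ℤ)-1) (-(n:ℤ)) = f :=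
      fun A₀ => (vanish_iff A₀ P (-(n:ℤ))).1 (h A₀)
    have hK := (surj_iff_projective_ker hP (-(n:ℤ)) (by omega)).1 h2
    refine ⟨truncC P (-(n:ℤ)), ⟨truncC_resolution hP (-(n:ℤ)) (by omega) hK⟩, ?_⟩
    intro j hj
    exact truncC_isZero P _ (by omega)
  · rintro ⟨C, ⟨hC⟩, hbd⟩ A₀
    rw [vanish_iff]
    intro f hf
    exact surjP_of_bounded hP hC (-(n:ℤ)) (by omega) (hbd _ (by omega)) f hf
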